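/- arXiv:1703.02937 — 6 statements merged into one kernel-verified Lean document; each statement's English description precedes it below -/
import Mathlib

section
/- Let A = (a_ij) be an N×N real matrix with nonnegative entries and zero diagonal such that the directed graph G[A] is strongly connected. Then there exist strictly positive constants p_1,…,p_N (determined by A) such that whenever vectors y_1,…,y_N ∈ ℝ^m and u_1,…,u_N ∈ ℝ^m satisfy u_i = Σ_{j=1}^N a_ij (y_j − y_i) for every i, one has Σ_{i=1}^N p_i ⟨y_i, u_i⟩ = −(1/2) Σ_{i,j=1}^N p_i a_ij |y_j − y_i|². -/
open RealInnerProductSpace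

/-- Auxiliary: a strongly connected nonnegative matrix admits a strictly
positive left null vector of its Laplacian (balance condition). -/
lemma exists_pos_balanced_aux (N : ℕ) (A : Fin N → Fin N → ℝ)
    (hA_nonneg : ∀ i j, 0 ≤ A i j)
    (hconn : ∀ i j : Fin N, i ≠ j → Relation.TransGen (fun a b => 0 < A a b) i j) :
    ∃ p : Fin N → ℝ, (∀ i, 0 < p i) ∧
      ∀ j, (∑ k, A j k) * p j = ∑ i, A i j * p i := by
  rcases Nat.eq_zero_or_pos N with hN | hN
  · subst hN
    exact ⟨fun i => 1, fun i => i.elim0, fun j => j.elim0⟩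
  set L : Matrix (Fin N) (Fin N) ℝ :=
    Matrix.of (fun i j => (if i = j then ∑ k, A i k else 0) - A i j) with hL
  have hone : (fun _ : Fin N => (1:ℝ)) ≠ 0 := by
    intro h
    have := congrFun h ⟨0, hN⟩
    simp at this
  have h1 : L.mulVec (fun _ => 1) = 0 := by
    funext i
    simp [hL, Matrix.mulVec, dotProduct, sub_mul, Finset.sum_sub_distrib]
  have hdet : L.det = 0 := (Matrix.exists_mulVec_eq_zero_iff).mp ⟨_, hone, h1⟩
  have hdetT : L.transpose.det = 0 := by rwa [Matrix.det_transpose]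
  obtain ⟨v, hv0, hvz⟩ := (Matrix.exists_mulVec_eq_zero_iff).mpr hdetT
  have hbalv : ∀ j, (∑ k, A j k) * v j = ∑ i, A i j * v i := by
    intro j
    have := congrFun hvz j
    simp only [Matrix.mulVec, dotProduct, Matrix.transpose_apply, hL,
      Matrix.of_apply, sub_mul, Finset.sum_sub_distrib, Pi.zero_apply] at this
    simp only [ite_mul, zero_mul, Finset.sum_ite_eq', Finset.mem_univ, if_true] at this
    linarith [this]
  set w : Fin N → ℝ := fun i => |v i| with hw
  have hineq : ∀ j, (∑ k, A j k) * w j ≤ ∑ i, A i j * w i := by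
    intro j
    have hd : 0 ≤ ∑ k, A j k := Finset.sum_nonneg fun k _ => hA_nonneg j k
    calc (∑ k, A j k) * w j = |(∑ k, A j k) * v j| := by
          rw [abs_mul, abs_of_nonneg hd]
      _ = |∑ i, A i j * v i| := by rw [hbalv j]
      _ ≤ ∑ i, |A i j * v i| := Finset.abs_sum_le_sum_abs _ _
      _ = ∑ i, A i j * w i := by
          refine Finset.sum_congr rfl fun i _ => ?_
          rw [abs_mul, abs_of_nonneg (hA_nonneg i j)]
  have hsum_eq : ∑ j, (∑ k, A j k) * w j = ∑ j, ∑ i, A i j * w i := by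
    rw [Finset.sum_comm]
    exact Finset.sum_congr rfl fun i _ => by rw [Finset.sum_mul]
  have hbal : ∀ j, (∑ k, A j k) * w j = ∑ i, A i j * w i := by
    intro j
    exact (Finset.sum_eq_sum_iff_of_le (fun j _ => hineq j)).mp hsum_eq j (Finset.mem_univ j)
  have hzero : ∀ a b, 0 < A a b → w b = 0 → w a = 0 := by
    intro a b hab hb
    have h := hbal b
    rw [hb, mul_zero] at h
    have h2 := (Finset.sum_eq_zero_iff_of_nonneg
      (fun i _ => mul_nonneg (hA_nonneg i b) (abs_nonneg (v i)))).mp h.symm a (Finset.mem_univ a)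
    exact (mul_eq_zero.mp h2).resolve_left (ne_of_gt hab)
  have hprop : ∀ i j : Fin N, Relation.TransGen (fun a b => 0 < A a b) i j →
      w j = 0 → w i = 0 := by
    intro i j h
    induction h with
    | single hr => exact fun hj => hzero _ _ hr hj
    | tail _ hr ih => exact fun hj => ih (hzero _ _ hr hj)
  obtain ⟨i0, hi0⟩ := Function.ne_iff.mp hv0
  have hwpos : ∀ j, 0 < w j := by
    intro j
    rcases (abs_nonneg (v j)).lt_or_eq with h | h
    · exact h
    · exfalso
      by_cases hij : i0 = j
      · exact hi0 (abs_eq_zero.mp (by rw [hij]; exact h.symm))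
      · exact hi0 (abs_eq_zero.mp (hprop i0 j (hconn i0 j hij) h.symm))
  exact ⟨w, hwpos, hbal⟩

/-- Lemma 1: if the directed graph `G[A]` of a nonnegative matrix `A` with zero
diagonal is strongly connected, there exist strictly positive constants `p i`
(determined by `A`) such that whenever `u i = ∑ j, a_ij • (y j - y i)`, one has
`∑ i, p i * ⟪y i, u i⟫ = -(1/2) * ∑ i j, p i * a_ij * ‖y j - y i‖²`. -/
theorem exists_positive_weights_laplacian_identity
    (N m : ℕ) (A : Fin N → Fin N → ℝ)
    (hA_nonneg : ∀ i j, 0 ≤ A i j)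
    (hA_diag : ∀ i, A i i = 0)
    (hconn : ∀ i j : Fin N, i ≠ j → Relation.TransGen (fun a b => 0 < A a b) i j) :
    ∃ p : Fin N → ℝ, (∀ i, 0 < p i) ∧
      ∀ y u : Fin N → EuclideanSpace ℝ (Fin m),
        (∀ i, u i = ∑ j, A i j • (y j - y i)) →
        ∑ i, p i * ⟪y i, u i⟫ =
          -(1 / 2) * ∑ i, ∑ j, p i * A i j * ‖y j - y i‖ ^ 2 := by
  obtain ⟨p, hp_pos, hbal⟩ := exists_pos_balanced_aux N A hA_nonneg hconn
  refine ⟨p, hp_pos, ?_⟩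
  intro y u hu
  set S1 := ∑ i, ∑ j, p i * A i j * ⟪y i, y i⟫ with hS1
  set S2 := ∑ i, ∑ j, p i * A i j * ⟪y i, y j⟫ with hS2
  set S3 := ∑ i, ∑ j, p i * A i j * ⟪y j, y j⟫ with hS3
  have e1 : ∑ i, p i * ⟪y i, u i⟫ = S2 - S1 := by
    rw [hS2, hS1, ← Finset.sum_sub_distrib]
    refine Finset.sum_congr rfl fun i _ => ?_
    rw [hu i, inner_sum, Finset.mul_sum, ← Finset.sum_sub_distrib]
    refine Finset.sum_congr rfl fun j _ => ?_
    rw [real_inner_smul_right, inner_sub_right]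
    ring
  have e2 : ∑ i, ∑ j, p i * A i j * ‖y j - y i‖ ^ 2 = S3 - 2 * S2 + S1 := by
    rw [hS3, hS2, hS1]
    simp only [Finset.mul_sum, ← Finset.sum_sub_distrib, ← Finset.sum_add_distrib]
    refine Finset.sum_congr rfl fun i _ => Finset.sum_congr rfl fun j _ => ?_
    rw [@norm_sub_sq_real, ← real_inner_self_eq_norm_sq, ← real_inner_self_eq_norm_sq,
      real_inner_comm (y j) (y i)]
    ring
  have key : S3 = S1 := by
    rw [hS3, hS1, Finset.sum_comm]
    refine Finset.sum_congr rfl fun j _ => ?_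
    have : ∑ i, p i * A i j * ⟪y j, y j⟫ = (∑ i, A i j * p i) * ⟪y j, y j⟫ := by
      rw [Finset.sum_mul]
      exact Finset.sum_congr rfl fun i _ => by ring
    rw [this, ← hbal j, Finset.sum_mul, Finset.sum_mul]
    exact Finset.sum_congr rfl fun k _ => by ring
  rw [e1, e2, key]
  ring
end

section
/- Let A = (a_ij) be an N×N real matrix with nonnegative entries and zero diagonal such that the directed graph G[A] is strongly connected, and let α_1,…,α_N ≥ 0 satisfy d_i^+[A] · α_i < 1/2 for every i, where d_i^+[A] = Σ_j a_ij. Then there exist strictly positive constants p_1,…,p_N and a constant ε > 0, depending only on A and the α_i, such that whenever vectors y_1,…,y_N ∈ ℝ^m and u_1,…,u_N ∈ ℝ^m satisfy u_i = Σ_{j=1}^N a_ij (y_j − y_i) for every i, one has Σ_{i=1}^N p_i (⟨y_i, u_i⟩ + α_i |u_i|²) ≤ −ε · Σ_{i,j=1}^N |y_j − y_i|². -/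
/-!
Write `d i = ∑ j, A i j`. Strong connectivity gives the Laplacian `diag d - A` a left null
vector `q` with strictly positive entries: take absolute values of any left null vector (the
triangle inequality and a total-mass count keep it null), then positivity spreads along arcs.
With these weights the cross terms telescope,
`∑ i, q i ⟪y i, u i⟫ = -½ ∑ i j, q i A i j ‖y j - y i‖²`, while Cauchy–Schwarz gives
`‖u i‖² ≤ d i ∑ j, A i j ‖y j - y i‖²`. So the weighted supply is at most
`-∑ i j, q i (½ - d i α i) A i j ‖y j - y i‖²`, and the Dirichlet energy
`∑ i j, A i j ‖y j - y i‖²` controls every `‖y l - y k‖²` by chaining along a path from `k` to `l`.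
-/

open RealInnerProductSpace Finset
open scoped Matrix

theorem exists_pos_forall_le_of_finite {ι : Type*} [Finite ι] (f : ι → ℝ) (hf : ∀ i, 0 < f i) :
    ∃ μ, 0 < μ ∧ ∀ i, μ ≤ f i := by
  cases isEmpty_or_nonempty ι
  · exact ⟨1, one_pos, isEmptyElim⟩
  obtain ⟨i₀, hi₀⟩ := Finite.exists_min f
  exact ⟨f i₀, hf i₀, hi₀⟩

theorem norm_sum_smul_sq_le {κ E : Type*} [SeminormedAddCommGroup E] [NormedSpace ℝ E]
    {s : Finset κ} {w : κ → ℝ} (hw : ∀ i ∈ s, 0 ≤ w i) (v : κ → E) :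
    ‖∑ i ∈ s, w i • v i‖ ^ 2 ≤ (∑ i ∈ s, w i) * ∑ i ∈ s, w i * ‖v i‖ ^ 2 :=
  calc ‖∑ i ∈ s, w i • v i‖ ^ 2 ≤ (∑ i ∈ s, w i * ‖v i‖) ^ 2 := by
        gcongr
        refine (norm_sum_le _ _).trans_eq (sum_congr rfl fun i hi => ?_)
        rw [norm_smul, Real.norm_of_nonneg (hw i hi)]
    _ ≤ _ := sum_sq_le_sum_mul_sum_of_sq_le_mul s hw
        (fun i hi => mul_nonneg (hw i hi) (sq_nonneg _)) (fun i _ => le_of_eq (by ring))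

theorem real_inner_sub_self_eq {E : Type*} [NormedAddCommGroup E] [InnerProductSpace ℝ E]
    (a b : E) :
    ⟪a, b - a⟫ = (‖b‖ ^ 2 - ‖a‖ ^ 2 - ‖b - a‖ ^ 2) / 2 := by
  rw [inner_sub_right, real_inner_self_eq_norm_sq, norm_sub_sq_real, real_inner_comm]
  ring

variable {ι : Type*} [Fintype ι]

def graphLaplacian [DecidableEq ι] (A : ι → ι → ℝ) : Matrix ι ι ℝ :=
  Matrix.diagonal (fun i => ∑ j, A i j) - Matrix.of A

/-- `q` is a left null vector of `graphLaplacian A`. -/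
def IsLeftBalanced (A : ι → ι → ℝ) (q : ι → ℝ) : Prop :=
  ∀ j, ∑ i, q i * A i j = q j * ∑ k, A j k

theorem graphLaplacian_mulVec_one [DecidableEq ι] (A : ι → ι → ℝ) :
    graphLaplacian A *ᵥ 1 = 0 := by
  ext i
  rw [graphLaplacian, Matrix.sub_mulVec, Pi.sub_apply, Matrix.mulVec_diagonal]
  simp [Matrix.mulVec, dotProduct]

theorem vecMul_graphLaplacian_apply [DecidableEq ι] (A : ι → ι → ℝ) (q : ι → ℝ) (j : ι) :
    (q ᵥ* graphLaplacian A) j = q j * ∑ k, A j k - ∑ i, q i * A i j := by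
  rw [graphLaplacian, Matrix.vecMul_sub, Pi.sub_apply, Matrix.vecMul_diagonal]
  rfl

theorem exists_ne_zero_isLeftBalanced [Nonempty ι] (A : ι → ι → ℝ) :
    ∃ p, p ≠ 0 ∧ IsLeftBalanced A p := by
  classical
  have hdet : (graphLaplacian A).det = 0 :=
    Matrix.exists_mulVec_eq_zero_iff.mp ⟨1, one_ne_zero, graphLaplacian_mulVec_one A⟩
  obtain ⟨p, hp, hpL⟩ := Matrix.exists_vecMul_eq_zero_iff.mpr hdet
  refine ⟨p, hp, fun j => ?_⟩
  have hj := congrFun hpL j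
  rw [vecMul_graphLaplacian_apply] at hj
  simpa using (sub_eq_zero.mp hj).symm

namespace IsLeftBalanced

variable {A : ι → ι → ℝ} {q : ι → ℝ}

theorem abs (hA : ∀ i j, 0 ≤ A i j) (hq : IsLeftBalanced A q) :
    IsLeftBalanced A fun i => |q i| := by
  have hle : ∀ j ∈ univ, |q j| * ∑ k, A j k ≤ ∑ i, |q i| * A i j := fun j _ =>
    calc |q j| * ∑ k, A j k = |∑ i, q i * A i j| := by
          rw [hq j, abs_mul, abs_of_nonneg (sum_nonneg fun k _ => hA j k)]
      _ ≤ ∑ i, |q i * A i j| := abs_sum_le_sum_abs _ _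
      _ = ∑ i, |q i| * A i j := by simp only [abs_mul, abs_of_nonneg (hA _ j)]
  have htotal : ∑ j, |q j| * ∑ k, A j k = ∑ j, ∑ i, |q i| * A i j := by
    rw [sum_comm]
    simp only [mul_sum]
  exact fun j => ((sum_eq_sum_iff_of_le hle).mp htotal j (mem_univ j)).symm

theorem pos_of_transGen (hA : ∀ i j, 0 ≤ A i j) (hq : IsLeftBalanced A q)
    (hq0 : ∀ i, 0 ≤ q i) {a b : ι} (hab : Relation.TransGen (fun a b => 0 < A a b) a b)
    (ha : 0 < q a) : 0 < q b := by
  have arc : ∀ {a b : ι}, 0 < q a → 0 < A a b → 0 < q b := fun {a b} ha hab => by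
    have h : q a * A a b ≤ q b * ∑ k, A b k :=
      hq b ▸ single_le_sum (fun i _ => mul_nonneg (hq0 i) (hA i b)) (mem_univ a)
    exact pos_of_mul_pos_left ((mul_pos ha hab).trans_le h) (sum_nonneg fun k _ => hA b k)
  induction hab with
  | single h => exact arc ha h
  | tail _ h ih => exact arc ih h

end IsLeftBalanced

theorem exists_pos_isLeftBalanced {A : ι → ι → ℝ} (hA : ∀ i j, 0 ≤ A i j)
    (hconn : ∀ i j : ι, i ≠ j → Relation.TransGen (fun a b => 0 < A a b) i j) :
    ∃ q : ι → ℝ, (∀ i, 0 < q i) ∧ IsLeftBalanced A q := by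
  cases isEmpty_or_nonempty ι
  · exact ⟨0, isEmptyElim, isEmptyElim⟩
  obtain ⟨p, hp, hbal⟩ := exists_ne_zero_isLeftBalanced A
  obtain ⟨i₀, hi₀⟩ := Function.ne_iff.mp hp
  refine ⟨fun i => |p i|, fun j => ?_, hbal.abs hA⟩
  rcases eq_or_ne i₀ j with rfl | hne
  · exact abs_pos.mpr hi₀
  · exact (hbal.abs hA).pos_of_transGen hA (fun i => abs_nonneg _) (hconn i₀ j hne)
      (abs_pos.mpr hi₀)

section DirichletEnergy

variable {E : Type*} [SeminormedAddCommGroup E]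

def dirichletEnergy (A : ι → ι → ℝ) (y : ι → E) : ℝ :=
  ∑ i, ∑ j, A i j * ‖y j - y i‖ ^ 2

variable {A : ι → ι → ℝ}

theorem dirichletEnergy_nonneg (hA : ∀ i j, 0 ≤ A i j) (y : ι → E) :
    0 ≤ dirichletEnergy A y :=
  sum_nonneg fun i _ => sum_nonneg fun j _ => mul_nonneg (hA i j) (sq_nonneg _)

theorem mul_sq_norm_sub_le_dirichletEnergy (hA : ∀ i j, 0 ≤ A i j) (a b : ι) (y : ι → E) :
    A a b * ‖y b - y a‖ ^ 2 ≤ dirichletEnergy A y :=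
  calc A a b * ‖y b - y a‖ ^ 2 ≤ ∑ j, A a j * ‖y j - y a‖ ^ 2 :=
        single_le_sum (f := fun j => A a j * ‖y j - y a‖ ^ 2)
          (fun j _ => mul_nonneg (hA a j) (sq_nonneg _)) (mem_univ b)
    _ ≤ dirichletEnergy A y :=
        single_le_sum (f := fun i => ∑ j, A i j * ‖y j - y i‖ ^ 2)
          (fun i _ => sum_nonneg fun j _ => mul_nonneg (hA i j) (sq_nonneg _)) (mem_univ a)

theorem exists_sq_norm_sub_le_of_transGen (hA : ∀ i j, 0 ≤ A i j) {k l : ι}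
    (h : Relation.TransGen (fun a b => 0 < A a b) k l) :
    ∃ K, 0 ≤ K ∧ ∀ y : ι → E, ‖y l - y k‖ ^ 2 ≤ K * dirichletEnergy A y := by
  have arc : ∀ {a b : ι}, 0 < A a b → ∀ y : ι → E,
      ‖y b - y a‖ ^ 2 ≤ (A a b)⁻¹ * dirichletEnergy A y := fun {a b} hab y => by
    rw [← div_eq_inv_mul, le_div_iff₀ hab, mul_comm]
    exact mul_sq_norm_sub_le_dirichletEnergy hA a b y
  induction h with
  | single hab => exact ⟨_, inv_nonneg.mpr hab.le, arc hab⟩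
  | @tail b c _ hbc ih =>
    obtain ⟨K, hK0, hK⟩ := ih
    refine ⟨2 * (K + (A b c)⁻¹), mul_nonneg zero_le_two (add_nonneg hK0 (inv_nonneg.mpr hbc.le)),
      fun y => ?_⟩
    calc ‖y c - y k‖ ^ 2 = ‖(y b - y k) + (y c - y b)‖ ^ 2 := by
          rw [add_comm, sub_add_sub_cancel]
      _ ≤ (‖y b - y k‖ + ‖y c - y b‖) ^ 2 := by gcongr; exact norm_add_le _ _
      _ ≤ 2 * (‖y b - y k‖ ^ 2 + ‖y c - y b‖ ^ 2) := add_sq_le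
      _ ≤ 2 * (K * dirichletEnergy A y + (A b c)⁻¹ * dirichletEnergy A y) := by
          gcongr
          exacts [hK y, arc hbc y]
      _ = 2 * (K + (A b c)⁻¹) * dirichletEnergy A y := by ring

theorem exists_sum_sq_norm_sub_le_mul_dirichletEnergy (hA : ∀ i j, 0 ≤ A i j)
    (hconn : ∀ i j : ι, i ≠ j → Relation.TransGen (fun a b => 0 < A a b) i j) :
    ∃ K, 0 ≤ K ∧ ∀ y : ι → E, ∑ i, ∑ j, ‖y j - y i‖ ^ 2 ≤ K * dirichletEnergy A y := by
  have hpair : ∀ k l : ι, ∃ K, 0 ≤ K ∧ ∀ y : ι → E,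
      ‖y l - y k‖ ^ 2 ≤ K * dirichletEnergy A y := fun k l => by
    rcases eq_or_ne k l with rfl | hne
    · exact ⟨0, le_rfl, fun y => by simp⟩
    · exact exists_sq_norm_sub_le_of_transGen hA (hconn k l hne)
  choose K hK0 hK using hpair
  refine ⟨∑ k, ∑ l, K k l, sum_nonneg fun k _ => sum_nonneg fun l _ => hK0 k l, fun y => ?_⟩
  calc ∑ i, ∑ j, ‖y j - y i‖ ^ 2 ≤ ∑ i, ∑ j, K i j * dirichletEnergy A y := by
        gcongr with i _ j _
        exact hK i j y
    _ = (∑ k, ∑ l, K k l) * dirichletEnergy A y := by simp only [sum_mul]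

end DirichletEnergy

section InnerProduct

variable {E : Type*} [NormedAddCommGroup E] [InnerProductSpace ℝ E] {A : ι → ι → ℝ}

theorem IsLeftBalanced.sum_mul_inner_eq {q : ι → ℝ} (hq : IsLeftBalanced A q) (y : ι → E) :
    ∑ i, q i * ⟪y i, ∑ j, A i j • (y j - y i)⟫ =
      -(1 / 2) * ∑ i, ∑ j, q i * A i j * ‖y j - y i‖ ^ 2 := by
  have hexpand : ∀ i, q i * ⟪y i, ∑ j, A i j • (y j - y i)⟫ =
      (∑ j, q i * A i j * ‖y j‖ ^ 2 - ∑ j, q i * A i j * ‖y i‖ ^ 2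
        - ∑ j, q i * A i j * ‖y j - y i‖ ^ 2) / 2 := fun i => by
    simp only [inner_sum, real_inner_smul_right, real_inner_sub_self_eq, mul_sum,
      ← sum_sub_distrib, sum_div]
    exact sum_congr rfl fun j _ => by ring
  have hin : ∑ i, ∑ j, q i * A i j * ‖y j‖ ^ 2 = ∑ j, q j * (∑ k, A j k) * ‖y j‖ ^ 2 := by
    rw [sum_comm]
    exact sum_congr rfl fun j _ => by rw [← sum_mul, hq j]
  have hout : ∑ i, ∑ j, q i * A i j * ‖y i‖ ^ 2 = ∑ i, q i * (∑ k, A i k) * ‖y i‖ ^ 2 :=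
    sum_congr rfl fun i _ => by rw [← sum_mul, ← mul_sum]
  simp only [hexpand, ← sum_div, sum_sub_distrib, hin, hout]
  ring

theorem sum_mul_supply_le_neg_mul_dirichletEnergy {q α : ι → ℝ} {μ : ℝ}
    (hA : ∀ i j, 0 ≤ A i j) (hq0 : ∀ i, 0 ≤ q i) (hq : IsLeftBalanced A q) (hα : ∀ i, 0 ≤ α i)
    (hμ : ∀ i, μ ≤ q i * (1 / 2 - (∑ k, A i k) * α i))
    (y u : ι → E) (hu : ∀ i, u i = ∑ j, A i j • (y j - y i)) :
    ∑ i, q i * (⟪y i, u i⟫ + α i * ‖u i‖ ^ 2) ≤ -μ * dirichletEnergy A y := by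
  have hu_sq : ∀ i, α i * ‖u i‖ ^ 2 ≤ α i * ((∑ k, A i k) * ∑ j, A i j * ‖y j - y i‖ ^ 2) :=
    fun i => by
      rw [hu i]
      exact mul_le_mul_of_nonneg_left (norm_sum_smul_sq_le (fun j _ => hA i j) _) (hα i)
  have hinner : ∑ i, q i * ⟪y i, u i⟫ = -(1 / 2) * ∑ i, ∑ j, q i * A i j * ‖y j - y i‖ ^ 2 := by
    simp only [hu]
    exact hq.sum_mul_inner_eq y
  calc ∑ i, q i * (⟪y i, u i⟫ + α i * ‖u i‖ ^ 2)
      = ∑ i, q i * ⟪y i, u i⟫ + ∑ i, q i * (α i * ‖u i‖ ^ 2) := by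
        rw [← sum_add_distrib]
        simp only [mul_add]
    _ ≤ -(1 / 2) * ∑ i, ∑ j, q i * A i j * ‖y j - y i‖ ^ 2 +
          ∑ i, q i * (α i * ((∑ k, A i k) * ∑ j, A i j * ‖y j - y i‖ ^ 2)) := by
        rw [hinner]
        exact add_le_add le_rfl
          (sum_le_sum fun i _ => mul_le_mul_of_nonneg_left (hu_sq i) (hq0 i))
    _ = -∑ i, ∑ j, q i * (1 / 2 - (∑ k, A i k) * α i) * (A i j * ‖y j - y i‖ ^ 2) := by
        simp only [mul_sum, ← sum_add_distrib, ← sum_neg_distrib]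
        exact sum_congr rfl fun i _ => sum_congr rfl fun j _ => by ring
    _ ≤ -∑ i, ∑ j, μ * (A i j * ‖y j - y i‖ ^ 2) := by
        gcongr with i _ j _
        exacts [mul_nonneg (hA i j) (sq_nonneg _), hμ i]
    _ = -μ * dirichletEnergy A y := by
        rw [dirichletEnergy, neg_mul, mul_sum]
        simp only [mul_sum]

end InnerProduct

theorem diffusive_coupling_strict_passivity_bound_general
    (N m : ℕ) (A : Fin N → Fin N → ℝ)
    (hA_nonneg : ∀ i j, 0 ≤ A i j)
    (hconn : ∀ i j : Fin N, i ≠ j → Relation.TransGen (fun a b => 0 < A a b) i j)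
    (α : Fin N → ℝ)
    (hα_nonneg : ∀ i, 0 ≤ α i)
    (hα_deg : ∀ i, (∑ j, A i j) * α i < 1 / 2) :
    ∃ (p : Fin N → ℝ) (ε : ℝ), (∀ i, 0 < p i) ∧ 0 < ε ∧
      ∀ y u : Fin N → EuclideanSpace ℝ (Fin m),
        (∀ i, u i = ∑ j, A i j • (y j - y i)) →
        ∑ i, p i * (⟪y i, u i⟫ + α i * ‖u i‖ ^ 2) ≤
          -ε * ∑ i, ∑ j, ‖y j - y i‖ ^ 2 := by
  obtain ⟨q, hq_pos, hq⟩ := exists_pos_isLeftBalanced hA_nonneg hconn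
  obtain ⟨K, hK0, hK⟩ := exists_sum_sq_norm_sub_le_mul_dirichletEnergy
    (E := EuclideanSpace ℝ (Fin m)) hA_nonneg hconn
  obtain ⟨μ, hμ0, hμ⟩ := exists_pos_forall_le_of_finite
    (fun i => q i * (1 / 2 - (∑ k, A i k) * α i))
    (fun i => mul_pos (hq_pos i) (by linarith [hα_deg i]))
  refine ⟨q, μ / (K + 1), hq_pos, by positivity, fun y u hu => ?_⟩
  have hε : μ / (K + 1) * ∑ i, ∑ j, ‖y j - y i‖ ^ 2 ≤ μ * dirichletEnergy A y := by
    rw [div_mul_eq_mul_div, div_le_iff₀ (by positivity)]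
    nlinarith [hK y, dirichletEnergy_nonneg hA_nonneg y]
  calc ∑ i, q i * (⟪y i, u i⟫ + α i * ‖u i‖ ^ 2) ≤ -μ * dirichletEnergy A y :=
        sum_mul_supply_le_neg_mul_dirichletEnergy hA_nonneg (fun i => (hq_pos i).le) hq
          hα_nonneg hμ y u hu
    _ ≤ -(μ / (K + 1)) * ∑ i, ∑ j, ‖y j - y i‖ ^ 2 := by linarith

/-- Corollary 1: if `G[A]` is strongly connected and `d_i⁺[A] * α_i < 1/2` with
`α_i ≥ 0`, there are positive constants `p i` and `ε > 0` such that whenever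
`u i = ∑ j, a_ij • (y j - y i)`,
`∑ i, p i * (⟪y i, u i⟫ + α_i ‖u i‖²) ≤ -ε * ∑ i j, ‖y j - y i‖²`. -/
theorem diffusive_coupling_strict_passivity_bound
    (N m : ℕ) (A : Fin N → Fin N → ℝ)
    (hA_nonneg : ∀ i j, 0 ≤ A i j)
    (hA_diag : ∀ i, A i i = 0)
    (hconn : ∀ i j : Fin N, i ≠ j → Relation.TransGen (fun a b => 0 < A a b) i j)
    (α : Fin N → ℝ)
    (hα_nonneg : ∀ i, 0 ≤ α i)
    (hα_deg : ∀ i, (∑ j, A i j) * α i < 1 / 2) :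
    ∃ (p : Fin N → ℝ) (ε : ℝ), (∀ i, 0 < p i) ∧ 0 < ε ∧
      ∀ y u : Fin N → EuclideanSpace ℝ (Fin m),
        (∀ i, u i = ∑ j, A i j • (y j - y i)) →
        ∑ i, p i * (⟪y i, u i⟫ + α i * ‖u i‖ ^ 2) ≤
          -ε * ∑ i, ∑ j, ‖y j - y i‖ ^ 2 :=
  diffusive_coupling_strict_passivity_bound_general N m A hA_nonneg hconn α hα_nonneg hα_deg
end

section
/- Let α ≥ 0 and b > 0 be real constants with 2αb < 1, and set α̂ = α/(1 − 2αb) and γ = b(1 − αb)/(1 − 2αb). Let y, u : [0,∞) → ℝ^m be locally integrable functions with |u|², |y|² and ⟨y,u⟩ locally integrable, and let V : [0,∞) → ℝ be a function such that V(T) − V(0) ≤ ∫_0^T (⟨y(t), u(t)⟩ + α|u(t)|²) dt for every T ≥ 0. Define û(t) = u(t) + b·y(t) and V̂(T) = V(T)/(1 − 2αb). Then V̂(T) − V̂(0) ≤ ∫_0^T (⟨y(t), û(t)⟩ + α̂|û(t)|² − γ|y(t)|²) dt for every T ≥ 0. -/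
open RealInnerProductSpace MeasureTheory

theorem inner_add_smul_supply_rate_eq {E : Type*} [NormedAddCommGroup E] [InnerProductSpace ℝ E]
    {α b : ℝ} (hc : 1 - 2 * α * b ≠ 0) (y u : E) :
    ⟪y, u + b • y⟫ + α / (1 - 2 * α * b) * ‖u + b • y‖ ^ 2
        - b * (1 - α * b) / (1 - 2 * α * b) * ‖y‖ ^ 2
      = (⟪y, u⟫ + α * ‖u‖ ^ 2) / (1 - 2 * α * b) := by
  rw [inner_add_right, real_inner_smul_right, real_inner_self_eq_norm_sq, norm_add_sq_real,
    real_inner_smul_right, norm_smul, Real.norm_eq_abs, mul_pow, sq_abs, real_inner_comm y u]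
  linear_combination (-(⟪y, u⟫ + b * ‖y‖ ^ 2)) * mul_inv_cancel₀ hc

theorem ifp_input_transformation_general
    (m : ℕ) (α b : ℝ) (hab : 2 * α * b < 1)
    (y u : ℝ → EuclideanSpace ℝ (Fin m)) (V : ℝ → ℝ)
    (hdiss : ∀ T, 0 ≤ T →
      V T - V 0 ≤ ∫ t in (0 : ℝ)..T, (⟪y t, u t⟫ + α * ‖u t‖ ^ 2)) :
    ∀ T, 0 ≤ T →
      V T / (1 - 2 * α * b) - V 0 / (1 - 2 * α * b) ≤
        ∫ t in (0 : ℝ)..T,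
          (⟪y t, u t + b • y t⟫
            + (α / (1 - 2 * α * b)) * ‖u t + b • y t‖ ^ 2
            - (b * (1 - α * b) / (1 - 2 * α * b)) * ‖y t‖ ^ 2) := by
  intro T hT
  have hc : 0 < 1 - 2 * α * b := by linarith
  simp_rw [inner_add_smul_supply_rate_eq hc.ne', intervalIntegral.integral_div, ← sub_div]
  exact div_le_div_of_nonneg_right (hdiss T hT) hc.le

/-- Lemma 2: if `V(T) - V(0) ≤ ∫_0^T (⟪y,u⟫ + α‖u‖²)` for all `T ≥ 0`, then with
`û = u + b•y`, `α̂ = α/(1-2αb)`, `γ = b(1-αb)/(1-2αb)` and `V̂ = V/(1-2αb)`,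
`V̂(T) - V̂(0) ≤ ∫_0^T (⟪y,û⟫ + α̂‖û‖² - γ‖y‖²)` for all `T ≥ 0`. -/
theorem ifp_input_transformation
    (m : ℕ) (α b : ℝ) (hα : 0 ≤ α) (hb : 0 < b) (hab : 2 * α * b < 1)
    (y u : ℝ → EuclideanSpace ℝ (Fin m)) (V : ℝ → ℝ)
    (hyu_int : ∀ T, 0 ≤ T → IntervalIntegrable (fun t => ⟪y t, u t⟫) volume 0 T)
    (hu_int : ∀ T, 0 ≤ T → IntervalIntegrable (fun t => ‖u t‖ ^ 2) volume 0 T)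
    (hy_int : ∀ T, 0 ≤ T → IntervalIntegrable (fun t => ‖y t‖ ^ 2) volume 0 T)
    (hdiss : ∀ T, 0 ≤ T →
      V T - V 0 ≤ ∫ t in (0 : ℝ)..T, (⟪y t, u t⟫ + α * ‖u t‖ ^ 2)) :
    ∀ T, 0 ≤ T →
      V T / (1 - 2 * α * b) - V 0 / (1 - 2 * α * b) ≤
        ∫ t in (0 : ℝ)..T,
          (⟪y t, u t + b • y t⟫
            + (α / (1 - 2 * α * b)) * ‖u t + b • y t‖ ^ 2
            - (b * (1 - α * b) / (1 - 2 * α * b)) * ‖y t‖ ^ 2) :=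
  ifp_input_transformation_general m α b hab y u V hdiss
end

section
/- Suppose ξ : [0,∞) → ℝ^m satisfies ξ(t) = ξ(0) + ∫_0^t g(s) ds for a measurable function g such that either g ∈ L^p([0,∞); ℝ^m) for some p ∈ (1,∞) or g is essentially bounded on [0,∞). If additionally ∫_0^∞ |ξ(t)|² dt < ∞, then ξ(t) → 0 as t → ∞. -/
/-!
The increment `ξ t - ξ s = ∫_s^t g` is bounded by Hölder's inequality by
`‖g‖_p · |t - s| ^ (1 - 1/p)` (the essentially bounded case being `p = ∞`), so `ξ` is
Hölder, hence uniformly continuous, on `[0, ∞)`. If `|ξ t| ≥ ε` for arbitrarily large `t`,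
uniform continuity keeps `|ξ| ≥ ε/2` on a window `[t, t + δ]` of fixed length, so each such
window contributes at least `δ (ε/2)²` to `∫ |ξ|²`; this contradicts the tails of a
convergent integral tending to zero.
-/

open MeasureTheory Set Filter Topology
open scoped ENNReal

theorem ENNReal.one_div_toReal_le_one {p : ℝ≥0∞} (hp : 1 ≤ p) : 1 / p.toReal ≤ 1 := by
  rw [one_div, ← ENNReal.toReal_inv]
  exact ENNReal.toReal_le_of_le_ofReal zero_le_one (by simpa using ENNReal.inv_le_one.2 hp)

theorem ENNReal.one_div_toReal_lt_one {p : ℝ≥0∞} (hp : 1 < p) : 1 / p.toReal < 1 := by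
  rw [one_div, ← ENNReal.toReal_inv]
  exact ENNReal.toReal_lt_of_lt_ofReal (by simpa using ENNReal.inv_lt_one.2 hp)

variable {E : Type*} [NormedAddCommGroup E]

theorem MeasureTheory.MemLp.intervalIntegrable_of_ordConnected {g : ℝ → E} {s : Set ℝ}
    [s.OrdConnected] {p : ℝ≥0∞} (hp : 1 ≤ p) (hg : MemLp g p (volume.restrict s))
    {x y : ℝ} (hx : x ∈ s) (hy : y ∈ s) : IntervalIntegrable g volume x y := by
  wlog hxy : x ≤ y generalizing x y
  · exact (this hy hx (le_of_not_ge hxy)).symm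
  have hsub : Ioc x y ⊆ s := Ioc_subset_Icc_self.trans (OrdConnected.out ‹_› hx hy)
  exact (intervalIntegrable_iff_integrableOn_Ioc_of_le hxy).2
    ((hg.mono_measure (Measure.restrict_mono hsub le_rfl)).integrable hp)

/-- For `p = ∞` the exponent is `1`, since `p.toReal = 0` and `1 / 0 = 0`. -/
theorem holderOnWith_of_eq_add_intervalIntegral [NormedSpace ℝ E] {F g : ℝ → E} {s : Set ℝ}
    [s.OrdConnected] {p : ℝ≥0∞} (hp : 1 ≤ p) (hg : MemLp g p (volume.restrict s))
    {a : ℝ} (ha : a ∈ s) (hF : ∀ t ∈ s, F t = F a + ∫ u in a..t, g u) :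
    HolderOnWith (eLpNorm g p (volume.restrict s)).toNNReal (1 - 1 / p.toReal).toNNReal F s := by
  intro x hx y hy
  wlog hxy : x ≤ y generalizing x y
  · rw [edist_comm, edist_comm x]
    exact this y hy x hx (le_of_not_ge hxy)
  have hsub : Ioc x y ⊆ s := Ioc_subset_Icc_self.trans (OrdConnected.out ‹_› hx hy)
  have hdiff : F y - F x = ∫ u in x..y, g u := by
    rw [hF y hy, hF x hx, ← intervalIntegral.integral_interval_sub_left
      (hg.intervalIntegrable_of_ordConnected hp ha hy)
      (hg.intervalIntegrable_of_ordConnected hp ha hx)]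
    abel
  rw [ENNReal.coe_toNNReal hg.eLpNorm_ne_top,
    Real.coe_toNNReal _ (sub_nonneg.2 (ENNReal.one_div_toReal_le_one hp)), edist_comm (F x),
    edist_eq_enorm_sub, hdiff, intervalIntegral.integral_of_le hxy]
  calc ‖∫ u in Ioc x y, g u‖ₑ ≤ ∫⁻ u in Ioc x y, ‖g u‖ₑ := enorm_integral_le_lintegral_enorm _
    _ = eLpNorm g 1 (volume.restrict (Ioc x y)) := eLpNorm_one_eq_lintegral_enorm.symm
    _ ≤ eLpNorm g p (volume.restrict (Ioc x y)) *
          volume.restrict (Ioc x y) univ ^ (1 / (1 : ℝ≥0∞).toReal - 1 / p.toReal) :=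
        eLpNorm_le_eLpNorm_mul_rpow_measure_univ hp
          (hg.1.mono_measure (Measure.restrict_mono hsub le_rfl))
    _ ≤ eLpNorm g p (volume.restrict s) * edist x y ^ (1 - 1 / p.toReal) := by
        rw [Measure.restrict_apply_univ, Real.volume_Ioc, edist_dist, Real.dist_eq, abs_sub_comm,
          abs_of_nonneg (sub_nonneg.2 hxy), ENNReal.toReal_one, div_one]
        gcongr

theorem tendsto_intervalIntegral_add_const_atTop [NormedSpace ℝ E] {f : ℝ → E} {a : ℝ}
    (hf : IntegrableOn f (Ioi a)) (δ : ℝ) :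
    Tendsto (fun t => ∫ x in t..t + δ, f x) atTop (𝓝 0) := by
  have hint : ∀ b, a < b → IntervalIntegrable f volume a b := fun b hb =>
    (intervalIntegrable_iff_integrableOn_Ioc_of_le hb.le).2 (hf.mono_set Ioc_subset_Ioi_self)
  rw [← sub_self (∫ x in Ioi a, f x)]
  refine ((intervalIntegral_tendsto_integral_Ioi a hf
    (tendsto_atTop_add_const_right _ δ tendsto_id)).sub
    (intervalIntegral_tendsto_integral_Ioi a hf tendsto_id)).congr' ?_
  filter_upwards [eventually_gt_atTop a, eventually_gt_atTop (a - δ)] with t ht htδ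
  exact intervalIntegral.integral_interval_sub_left (hint _ (by simp only [id]; linarith))
    (hint t ht)

theorem tendsto_zero_of_uniformContinuousOn_of_integrableOn_norm_pow {ξ : ℝ → E} {a : ℝ}
    {n : ℕ} (hξ : UniformContinuousOn ξ (Ici a))
    (hint : IntegrableOn (fun t => ‖ξ t‖ ^ n) (Ici a)) : Tendsto ξ atTop (𝓝 0) := by
  rw [Metric.tendsto_nhds]
  intro ε hε
  obtain ⟨δ, hδ, hclose⟩ := Metric.uniformContinuousOn_iff.1 hξ (ε / 2) (half_pos hε)
  have hsmall := (tendsto_intervalIntegral_add_const_atTop (hint.mono_set Ioi_subset_Ici_self)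
    (δ / 2)).eventually_lt_const (show 0 < δ / 2 * (ε / 2) ^ n by positivity)
  filter_upwards [hsmall, eventually_ge_atTop a] with t hsmall hta
  rw [dist_zero_right]
  by_contra! hbig
  have hlow : ∀ x ∈ Icc t (t + δ / 2), (ε / 2) ^ n ≤ ‖ξ x‖ ^ n := by
    intro x hx
    have hxt : dist (ξ x) (ξ t) < ε / 2 := hclose x (hta.trans hx.1) t hta
      (by rw [Real.dist_eq, abs_of_nonneg (by linarith [hx.1])]; linarith [hx.2])
    have hrev := norm_sub_norm_le (ξ t) (ξ x)
    rw [← dist_eq_norm, dist_comm] at hrev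
    exact pow_le_pow_left₀ (by positivity) (by linarith) n
  have hsub : uIcc t (t + δ / 2) ⊆ Ici a := by
    rw [uIcc_of_le (by linarith)]
    exact fun x hx => hta.trans hx.1
  refine hsmall.not_ge ?_
  calc δ / 2 * (ε / 2) ^ n = ∫ _ in t..t + δ / 2, (ε / 2) ^ n := by
        rw [intervalIntegral.integral_const, smul_eq_mul, add_sub_cancel_left]
    _ ≤ ∫ x in t..t + δ / 2, ‖ξ x‖ ^ n :=
      intervalIntegral.integral_mono_on (by linarith) intervalIntegrable_const
        (hint.mono_set hsub).intervalIntegrable hlow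

/-- Barbalat-type lemma: if `ξ(t) = ξ(0) + ∫_0^t g` where `g` is measurable and
either `∫_0^∞ ‖g‖^p < ∞` for some `p ∈ (1,∞)` or `g` is essentially bounded on
`[0,∞)`, and moreover `∫_0^∞ ‖ξ‖² < ∞`, then `ξ(t) → 0` as `t → ∞`. -/
theorem barbalat_L2_implies_convergence
    (m : ℕ) (ξ g : ℝ → EuclideanSpace ℝ (Fin m))
    (hg_meas : Measurable g)
    (hg : (∃ p : ℝ, 1 < p ∧ IntegrableOn (fun s => ‖g s‖ ^ p) (Set.Ici (0 : ℝ))) ∨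
          (∃ C : ℝ, ∀ᵐ s ∂(volume.restrict (Set.Ici (0 : ℝ))), ‖g s‖ ≤ C))
    (hξ : ∀ t, 0 ≤ t → ξ t = ξ 0 + ∫ s in (0 : ℝ)..t, g s)
    (hξ_L2 : IntegrableOn (fun t => ‖ξ t‖ ^ 2) (Set.Ici (0 : ℝ))) :
    Filter.Tendsto ξ Filter.atTop (nhds 0) := by
  obtain ⟨p, hp, hgp⟩ : ∃ p : ℝ≥0∞, 1 < p ∧ MemLp g p (volume.restrict (Ici 0)) := by
    rcases hg with ⟨p, hp, hint⟩ | ⟨C, hC⟩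
    · refine ⟨ENNReal.ofReal p, by simpa using hp, ?_⟩
      rwa [← integrable_norm_rpow_iff hg_meas.aestronglyMeasurable (by simp; linarith) (by simp),
        ENNReal.toReal_ofReal (by linarith)]
    · exact ⟨∞, ENNReal.one_lt_top, memLp_top_of_bound hg_meas.aestronglyMeasurable C hC⟩
  have hholder := holderOnWith_of_eq_add_intervalIntegral hp.le hgp self_mem_Ici hξ
  have hexp : 0 < (1 - 1 / p.toReal).toNNReal :=
    Real.toNNReal_pos.2 (sub_pos.2 (ENNReal.one_div_toReal_lt_one hp))
  exact tendsto_zero_of_uniformContinuousOn_of_integrableOn_norm_pow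
    (hholder.uniformContinuousOn hexp) hξ_L2
end

section
/- Let A = (a_ij) be an N×N real matrix with nonnegative entries and zero diagonal such that the directed graph G[A] is strongly connected, and let α_1,…,α_N ≥ 0 satisfy d_i^+[A] · α_i < 1/2 for every i, where d_i^+[A] = Σ_j a_ij. Let y_1,…,y_N : [0,∞) → ℝ^m be continuous functions, define u_i(t) = Σ_{j=1}^N a_ij (y_j(t) − y_i(t)), and suppose there exist nonnegative functions V_1,…,V_N : [0,∞) → ℝ (storage functions evaluated along the trajectories) such that V_i(T) − V_i(0) ≤ ∫_0^T (⟨y_i(t), u_i(t)⟩ + α_i |u_i(t)|²) dt for all T ≥ 0 and all i. Then the outputs are L²-synchronized: ∫_0^∞ |y_j(t) − y_i(t)|² dt < ∞ for all i, j. -/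
/-!
A strongly connected graph carries positive node weights `w` with `wᵀ L = 0`, `L` its Laplacian:
the absolute value of any nonzero left null vector of `L` is again one, and its zero set is closed
under predecessors. Weighting the dissipation inequalities by `w`, the terms `⟪y_i, u_i⟫` add up to
`-½ ∑ w_i ∑_j a_ij ‖y_j - y_i‖²`, while Cauchy–Schwarz gives
`‖u_i‖² ≤ d_i⁺ ∑_j a_ij ‖y_j - y_i‖²`. As `d_i⁺ α_i < ½`, the nonnegative storage `∑ w_i V_i`
bounds the time integral of the disagreement along every arc; the triangle inequality in `L²`
then carries this along paths to all pairs.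
-/

open RealInnerProductSpace MeasureTheory Finset Set Matrix

section BalancingWeight

variable {ι : Type*} [Fintype ι] {A : ι → ι → ℝ}

/-- `w` is a left null vector of the Laplacian `diag (∑ k, A i k) - A`. -/
def IsBalancingWeight (A : ι → ι → ℝ) (w : ι → ℝ) : Prop :=
  ∀ j, ∑ i, w i * A i j = w j * ∑ k, A j k

lemma exists_isBalancingWeight_ne_zero [Nonempty ι] (A : ι → ι → ℝ) :
    ∃ w ≠ 0, IsBalancingWeight A w := by
  classical
  set L : Matrix ι ι ℝ := Matrix.diagonal (fun i => ∑ k, A i k) - Matrix.of A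
  have hL : L *ᵥ (fun _ => 1) = 0 := by
    ext i
    simp [L, mulVec, dotProduct, diagonal_apply]
  have hdet : Lᵀ.det = 0 := by
    rw [Matrix.det_transpose, ← Matrix.exists_mulVec_eq_zero_iff]
    exact ⟨_, fun h => one_ne_zero (congrFun h (Classical.arbitrary ι)), hL⟩
  obtain ⟨w, hw0, hw⟩ := Matrix.exists_mulVec_eq_zero_iff.2 hdet
  refine ⟨w, hw0, fun j => ?_⟩
  have := congrFun hw j
  simp [L, mulVec, dotProduct, diagonal_apply, sub_mul, sum_sub_distrib] at this
  simp_rw [mul_comm (w _)]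
  linarith

lemma IsBalancingWeight.abs (hA : ∀ i j, 0 ≤ A i j) {w : ι → ℝ} (hw : IsBalancingWeight A w) :
    IsBalancingWeight A (|w ·|) := by
  -- the triangle inequality gives `≤` at every node, and both sides have the same total
  have hle : ∀ j, |w j| * ∑ k, A j k ≤ ∑ i, |w i| * A i j := fun j =>
    calc |w j| * ∑ k, A j k = |∑ i, w i * A i j| := by
          rw [hw j, abs_mul, abs_of_nonneg (sum_nonneg fun k _ => hA j k)]
      _ ≤ ∑ i, |w i * A i j| := abs_sum_le_sum_abs _ _
      _ = ∑ i, |w i| * A i j := by simp_rw [abs_mul, abs_of_nonneg (hA _ j)]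
  have htotal : ∑ j, |w j| * ∑ k, A j k = ∑ j, ∑ i, |w i| * A i j := by
    rw [sum_comm]
    simp_rw [mul_sum]
  exact fun j => ((sum_eq_sum_iff_of_le fun j _ => hle j).1 htotal j (mem_univ j)).symm

lemma IsBalancingWeight.eq_zero_of_pos (hA : ∀ i j, 0 ≤ A i j) {v : ι → ℝ}
    (hv : IsBalancingWeight A v) (hv0 : ∀ i, 0 ≤ v i) {i j : ι} (hij : 0 < A i j)
    (hvj : v j = 0) : v i = 0 := by
  have hsum : ∑ k, v k * A k j = 0 := by rw [hv j, hvj, zero_mul]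
  have := (sum_eq_zero_iff_of_nonneg fun k _ => mul_nonneg (hv0 k) (hA k j)).1 hsum i (mem_univ i)
  exact (mul_eq_zero.1 this).resolve_right hij.ne'

lemma IsBalancingWeight.pos (hA : ∀ i j, 0 ≤ A i j)
    (hconn : ∀ i j, i ≠ j → Relation.TransGen (fun a b => 0 < A a b) i j) {v : ι → ℝ}
    (hv : IsBalancingWeight A v) (hv0 : ∀ i, 0 ≤ v i) (hv_ne : v ≠ 0) (i : ι) : 0 < v i := by
  refine (hv0 i).lt_of_ne fun hvi => hv_ne (funext fun k => ?_)
  have hpath : ∀ k, Relation.TransGen (fun a b => 0 < A a b) k i → v k = 0 := fun k hk => by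
    induction hk using Relation.TransGen.head_induction_on with
    | single h => exact hv.eq_zero_of_pos hA hv0 h hvi.symm
    | head h _ ih => exact hv.eq_zero_of_pos hA hv0 h ih
  obtain rfl | hki := eq_or_ne k i
  exacts [hvi.symm, hpath k (hconn k i hki)]

theorem exists_pos_isBalancingWeight [Nonempty ι] (hA : ∀ i j, 0 ≤ A i j)
    (hconn : ∀ i j, i ≠ j → Relation.TransGen (fun a b => 0 < A a b) i j) :
    ∃ w, (∀ i, 0 < w i) ∧ IsBalancingWeight A w := by
  obtain ⟨w, hw0, hw⟩ := exists_isBalancingWeight_ne_zero A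
  refine ⟨_, (hw.abs hA).pos hA hconn (fun i => abs_nonneg _) ?_, hw.abs hA⟩
  exact fun h => hw0 (funext fun i => abs_eq_zero.1 (congrFun h i))

lemma IsBalancingWeight.sum_mul_sum_mul_sub_eq_zero {w : ι → ℝ} (hw : IsBalancingWeight A w)
    (f : ι → ℝ) :
    ∑ i, w i * ∑ j, A i j * (f j - f i) = 0 := by
  have hin : ∑ i, ∑ j, w i * A i j * f j = ∑ j, w j * (∑ k, A j k) * f j := by
    rw [sum_comm]
    exact sum_congr rfl fun j _ => by rw [← sum_mul, hw j]
  simp_rw [mul_sum, mul_sub, sum_sub_distrib, ← mul_assoc, hin, ← sum_mul, ← mul_sum]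
  ring

end BalancingWeight

section Disagreement

variable {ι E : Type*} [Fintype ι] [SeminormedAddCommGroup E]

lemma norm_sum_smul_sq_le_s9 [NormedSpace ℝ E] {a : ι → ℝ} (ha : ∀ j, 0 ≤ a j) (z : ι → E) :
    ‖∑ j, a j • z j‖ ^ 2 ≤ (∑ j, a j) * ∑ j, a j * ‖z j‖ ^ 2 := by
  have htri : ‖∑ j, a j • z j‖ ≤ ∑ j, a j * ‖z j‖ :=
    (norm_sum_le _ _).trans_eq <| sum_congr rfl fun j _ => by
      rw [norm_smul, Real.norm_of_nonneg (ha j)]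
  calc ‖∑ j, a j • z j‖ ^ 2 ≤ (∑ j, a j * ‖z j‖) ^ 2 := by gcongr
    _ ≤ (∑ j, a j) * ∑ j, a j * ‖z j‖ ^ 2 :=
      sum_sq_le_sum_mul_sum_of_sq_le_mul _ (fun j _ => ha j)
        (fun j _ => mul_nonneg (ha j) (sq_nonneg _)) fun j _ => le_of_eq (by ring)

def weightedDisagreement (A : ι → ι → ℝ) (c : ι → ℝ) (Y : ι → E) : ℝ :=
  ∑ i, c i * ∑ j, A i j * ‖Y j - Y i‖ ^ 2

variable {A : ι → ι → ℝ} {c : ι → ℝ}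

lemma weightedDisagreement_nonneg (hA : ∀ i j, 0 ≤ A i j) (hc : ∀ i, 0 ≤ c i) (Y : ι → E) :
    0 ≤ weightedDisagreement A c Y :=
  sum_nonneg fun i _ => mul_nonneg (hc i) <| sum_nonneg fun j _ => mul_nonneg (hA i j) (sq_nonneg _)

lemma mul_norm_sub_sq_le_weightedDisagreement (hA : ∀ i j, 0 ≤ A i j) (hc : ∀ i, 0 ≤ c i)
    (Y : ι → E) (a b : ι) : c a * A a b * ‖Y b - Y a‖ ^ 2 ≤ weightedDisagreement A c Y := by
  have hrow : A a b * ‖Y b - Y a‖ ^ 2 ≤ ∑ j, A a j * ‖Y j - Y a‖ ^ 2 :=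
    single_le_sum (f := fun j => A a j * ‖Y j - Y a‖ ^ 2)
      (fun j _ => mul_nonneg (hA a j) (sq_nonneg _)) (mem_univ b)
  calc c a * A a b * ‖Y b - Y a‖ ^ 2 ≤ c a * ∑ j, A a j * ‖Y j - Y a‖ ^ 2 := by
        rw [mul_assoc]; exact mul_le_mul_of_nonneg_left hrow (hc a)
    _ ≤ weightedDisagreement A c Y :=
      single_le_sum (f := fun i => c i * ∑ j, A i j * ‖Y j - Y i‖ ^ 2)
        (fun i _ => mul_nonneg (hc i) <| sum_nonneg fun j _ => mul_nonneg (hA i j) (sq_nonneg _))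
        (mem_univ a)

end Disagreement

section Diffusion

variable {ι E : Type*} [Fintype ι] [NormedAddCommGroup E] [InnerProductSpace ℝ E]

lemma inner_sum_smul_sub_self (a : ι → ℝ) (x : E) (z : ι → E) :
    ⟪x, ∑ j, a j • (z j - x)⟫ =
      (∑ j, a j * (‖z j‖ ^ 2 - ‖x‖ ^ 2)) / 2 - (∑ j, a j * ‖z j - x‖ ^ 2) / 2 := by
  have hterm : ∀ j, ⟪x, a j • (z j - x)⟫ =
      a j * ((‖z j‖ ^ 2 - ‖x‖ ^ 2) / 2 - ‖z j - x‖ ^ 2 / 2) := by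
    intro j
    rw [real_inner_smul_right, inner_sub_right, real_inner_self_eq_norm_sq, norm_sub_sq_real,
      real_inner_comm]
    ring
  rw [inner_sum, sum_congr rfl fun j _ => hterm j, sum_div, sum_div, ← sum_sub_distrib]
  exact sum_congr rfl fun j _ => by ring

lemma IsBalancingWeight.sum_supply_le {A : ι → ι → ℝ} (hA : ∀ i j, 0 ≤ A i j) {α w : ι → ℝ}
    (hα : ∀ i, 0 ≤ α i) (hw0 : ∀ i, 0 ≤ w i) (hw : IsBalancingWeight A w) (Y : ι → E) :
    ∑ i, w i * (⟪Y i, ∑ j, A i j • (Y j - Y i)⟫ + α i * ‖∑ j, A i j • (Y j - Y i)‖ ^ 2) ≤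
      -weightedDisagreement A (fun i => w i * (1 / 2 - (∑ j, A i j) * α i)) Y := by
  have hnode : ∀ i,
      w i * (⟪Y i, ∑ j, A i j • (Y j - Y i)⟫ + α i * ‖∑ j, A i j • (Y j - Y i)‖ ^ 2) ≤
        w i * (∑ j, A i j * (‖Y j‖ ^ 2 - ‖Y i‖ ^ 2)) / 2
          - w i * (1 / 2 - (∑ j, A i j) * α i) * ∑ j, A i j * ‖Y j - Y i‖ ^ 2 := by
    intro i
    have hu := mul_le_mul_of_nonneg_left (norm_sum_smul_sq_le_s9 (hA i) (Y · - Y i)) (hα i)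
    rw [inner_sum_smul_sub_self]
    nlinarith [hw0 i]
  -- the balancing weight cancels the `‖Y‖²` flux terms
  calc _ ≤ ∑ i, (w i * (∑ j, A i j * (‖Y j‖ ^ 2 - ‖Y i‖ ^ 2)) / 2
        - w i * (1 / 2 - (∑ j, A i j) * α i) * ∑ j, A i j * ‖Y j - Y i‖ ^ 2) :=
        sum_le_sum fun i _ => hnode i
    _ = _ := by
      rw [sum_sub_distrib, ← sum_div, hw.sum_mul_sum_mul_sub_eq_zero, weightedDisagreement]
      ring

end Diffusion

lemma integrableOn_Ici_of_intervalIntegral_le {f : ℝ → ℝ} {a C : ℝ} (hf : LocallyIntegrable f)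
    (hf0 : ∀ t, 0 ≤ f t) (hC : ∀ T, a ≤ T → ∫ t in a..T, f t ≤ C) : IntegrableOn f (Ici a) := by
  rw [integrableOn_Ici_iff_integrableOn_Ioi]
  refine integrableOn_Ioi_of_intervalIntegral_norm_bounded C a
    (fun T => (hf.integrableOn_isCompact isCompact_Icc).mono_set Ioc_subset_Icc_self)
    (Filter.tendsto_atTop_add_const_left _ a tendsto_natCast_atTop_atTop) ?_
  filter_upwards with n
  simp_rw [Real.norm_of_nonneg (hf0 _)]
  exact hC _ (le_add_of_nonneg_right n.cast_nonneg)

lemma intervalIntegral_le_of_storage {ι : Type*} [Fintype ι] {V s : ι → ℝ → ℝ} {w : ι → ℝ}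
    {D : ℝ → ℝ} {a T : ℝ} (haT : a ≤ T) (hw : ∀ k, 0 ≤ w k) (hV : ∀ k, 0 ≤ V k T)
    (hdiss : ∀ k, V k T - V k a ≤ ∫ t in a..T, s k t)
    (hs : ∀ k, IntervalIntegrable (s k) volume a T) (hD : IntervalIntegrable D volume a T)
    (hsD : ∀ t ∈ Icc a T, ∑ k, w k * s k t ≤ -D t) :
    ∫ t in a..T, D t ≤ ∑ k, w k * V k a := by
  have hws : IntervalIntegrable (fun t => ∑ k, w k * s k t) volume a T := by
    simpa only [Finset.sum_fn] using
      IntervalIntegrable.sum Finset.univ fun k _ => (hs k).const_mul (w k)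
  calc ∫ t in a..T, D t ≤ -∫ t in a..T, ∑ k, w k * s k t := by
        rw [← intervalIntegral.integral_neg]
        exact intervalIntegral.integral_mono_on haT hD hws.neg fun t ht =>
          le_neg_of_le_neg (hsD t ht)
    _ = -∑ k, w k * ∫ t in a..T, s k t := by
        rw [intervalIntegral.integral_finsetSum fun k _ => (hs k).const_mul (w k)]
        simp_rw [intervalIntegral.integral_const_mul]
    _ ≤ -∑ k, w k * (V k T - V k a) := by
        gcongr with k
        exacts [hw k, hdiss k]
    _ ≤ ∑ k, w k * V k a := by
        simp_rw [mul_sub, sum_sub_distrib]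
        have hVT : 0 ≤ ∑ k, w k * V k T := sum_nonneg fun k _ => mul_nonneg (hw k) (hV k)
        linarith

lemma memLp_sub_of_reflTransGen {α ι E : Type*} [MeasurableSpace α] {μ : Measure α}
    [NormedAddCommGroup E] {p : ENNReal} {r : ι → ι → Prop} {f : ι → α → E}
    (hr : ∀ a b, r a b → MemLp (f b - f a) p μ) {a b : ι} (hab : Relation.ReflTransGen r a b) :
    MemLp (f b - f a) p μ := by
  induction hab with
  | refl => simpa only [sub_self] using MemLp.zero
  | tail _ hbc ih => simpa only [sub_add_sub_cancel] using (hr _ _ hbc).add ih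

theorem output_L2_synchronization_general
    (N m : ℕ) (A : Fin N → Fin N → ℝ)
    (hA_nonneg : ∀ i j, 0 ≤ A i j)
    (hconn : ∀ i j : Fin N, i ≠ j → Relation.TransGen (fun a b => 0 < A a b) i j)
    (α : Fin N → ℝ)
    (hα_nonneg : ∀ i, 0 ≤ α i)
    (hα_deg : ∀ i, (∑ j, A i j) * α i < 1 / 2)
    (y : Fin N → ℝ → EuclideanSpace ℝ (Fin m))
    (hy_cont : ∀ i, Continuous (y i))
    (u : Fin N → ℝ → EuclideanSpace ℝ (Fin m))
    (hu : ∀ i t, u i t = ∑ j, A i j • (y j t - y i t))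
    (V : Fin N → ℝ → ℝ)
    (hV_nonneg : ∀ i t, 0 ≤ t → 0 ≤ V i t)
    (hdiss : ∀ i, ∀ T, 0 ≤ T →
      V i T - V i 0 ≤
        ∫ t in (0 : ℝ)..T, (⟪y i t, u i t⟫ + α i * ‖u i t‖ ^ 2)) :
    ∀ i j, IntegrableOn (fun t => ‖y j t - y i t‖ ^ 2) (Set.Ici (0 : ℝ)) := by
  obtain rfl : u = fun i t => ∑ j, A i j • (y j t - y i t) := funext₂ hu
  intro i j
  have : Nonempty (Fin N) := ⟨i⟩
  obtain ⟨w, hw_pos, hw⟩ := exists_pos_isBalancingWeight hA_nonneg hconn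
  set c : Fin N → ℝ := fun k => w k * (1 / 2 - (∑ l, A k l) * α k)
  have hc : ∀ k, 0 < c k := fun k => mul_pos (hw_pos k) (by linarith [hα_deg k])
  set D : ℝ → ℝ := fun t => weightedDisagreement A c (y · t)
  have hD_cont : Continuous D := by unfold D weightedDisagreement; fun_prop
  have hD : IntegrableOn D (Ici 0) :=
    integrableOn_Ici_of_intervalIntegral_le hD_cont.locallyIntegrable
      (fun t => weightedDisagreement_nonneg hA_nonneg (fun k => (hc k).le) _) fun T hT =>
      intervalIntegral_le_of_storage hT (fun k => (hw_pos k).le) (fun k => hV_nonneg k T hT)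
        (fun k => hdiss k T hT) (fun k => Continuous.intervalIntegrable (by fun_prop) _ _)
        (hD_cont.intervalIntegrable _ _)
        fun t _ => hw.sum_supply_le hA_nonneg hα_nonneg (fun k => (hw_pos k).le) (y · t)
  have hedge : ∀ a b, 0 < A a b → MemLp (y b - y a) 2 (volume.restrict (Ici 0)) := by
    intro a b hab
    refine (memLp_two_iff_integrable_sq_norm (by fun_prop)).2 <|
      (hD.const_mul (c a * A a b)⁻¹).mono' (by fun_prop) (ae_of_all _ fun t => ?_)
    rw [norm_pow, norm_norm, le_inv_mul_iff₀ (mul_pos (hc a) hab)]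
    exact mul_norm_sub_sq_le_weightedDisagreement hA_nonneg (fun k => (hc k).le) (y · t) a b
  have hpath : Relation.ReflTransGen (fun a b => 0 < A a b) i j := by
    obtain rfl | hij := eq_or_ne i j
    exacts [.refl, (hconn i j hij).to_reflTransGen]
  exact (memLp_two_iff_integrable_sq_norm (by fun_prop)).1 (memLp_sub_of_reflTransGen hedge hpath)

/-- Theorem 1, statement (1): for IFP(α_i) agents diffusively coupled over a
strongly connected graph with `d_i⁺[A]·α_i < 1/2`, the outputs are
`L²`-synchronized: `∫_0^∞ ‖y_j - y_i‖² < ∞` for all `i, j`. -/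
theorem output_L2_synchronization
    (N m : ℕ) (A : Fin N → Fin N → ℝ)
    (hA_nonneg : ∀ i j, 0 ≤ A i j)
    (hA_diag : ∀ i, A i i = 0)
    (hconn : ∀ i j : Fin N, i ≠ j → Relation.TransGen (fun a b => 0 < A a b) i j)
    (α : Fin N → ℝ)
    (hα_nonneg : ∀ i, 0 ≤ α i)
    (hα_deg : ∀ i, (∑ j, A i j) * α i < 1 / 2)
    (y : Fin N → ℝ → EuclideanSpace ℝ (Fin m))
    (hy_cont : ∀ i, Continuous (y i))
    (u : Fin N → ℝ → EuclideanSpace ℝ (Fin m))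
    (hu : ∀ i t, u i t = ∑ j, A i j • (y j t - y i t))
    (V : Fin N → ℝ → ℝ)
    (hV_nonneg : ∀ i t, 0 ≤ t → 0 ≤ V i t)
    (hdiss : ∀ i, ∀ T, 0 ≤ T →
      V i T - V i 0 ≤
        ∫ t in (0 : ℝ)..T, (⟪y i t, u i t⟫ + α i * ‖u i t‖ ^ 2)) :
    ∀ i j, IntegrableOn (fun t => ‖y j t - y i t‖ ^ 2) (Set.Ici (0 : ℝ)) :=
  output_L2_synchronization_general N m A hA_nonneg hconn α hα_nonneg hα_deg y hy_cont u hu V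
    hV_nonneg hdiss
end

section
/- Let τ > 0 and μ > 0 be real constants. Then for every real ω ≠ 0 one has Re( 1 / (τ(iω)³ + (iω)² + μ(iω)) ) = −1 / (μ² + (1 − 2τμ)ω² + τ²ω⁴). Moreover, if 2τμ ≤ 1, then Re( 1 / (τ(iω)³ + (iω)² + μ(iω)) ) ≥ −1/μ² for every real ω ≠ 0. -/
open Complex

lemma vehicle_aux (τ μ ω : ℝ) (hω : ω ≠ 0) :
    ((1 : ℂ) / (τ * (I * ω) ^ 3 + (I * ω) ^ 2 + μ * (I * ω))).re =
      -1 / (μ ^ 2 + (1 - 2 * τ * μ) * ω ^ 2 + τ ^ 2 * ω ^ 4) := by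
  have hz : (τ * (I * ω) ^ 3 + (I * ω) ^ 2 + μ * (I * ω) : ℂ) =
      Complex.mk (-ω ^ 2) (μ * ω - τ * ω ^ 3) := by
    apply Complex.ext <;> simp [mul_pow, pow_succ, Complex.I_mul_I] <;> ring
  rw [hz, one_div, Complex.inv_re]
  have hnsq : Complex.normSq (Complex.mk (-ω ^ 2) (μ * ω - τ * ω ^ 3)) =
      ω ^ 2 * (μ ^ 2 + (1 - 2 * τ * μ) * ω ^ 2 + τ ^ 2 * ω ^ 4) := by
    simp [Complex.normSq_mk]; ring
  rw [hnsq]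
  have hω2 : ω ^ 2 ≠ 0 := pow_ne_zero _ hω
  have hDpos : (0:ℝ) < μ ^ 2 + (1 - 2 * τ * μ) * ω ^ 2 + τ ^ 2 * ω ^ 4 := by
    have h1 : μ ^ 2 + (1 - 2 * τ * μ) * ω ^ 2 + τ ^ 2 * ω ^ 4 =
        (μ - τ * ω ^ 2) ^ 2 + ω ^ 2 := by ring
    rw [h1]
    positivity
  field_simp

/-- Real part of the vehicle-following transfer function on the imaginary axis:
for `τ, μ > 0` and real `ω ≠ 0`,
`Re(1/(τ(iω)³ + (iω)² + μ(iω))) = -1/(μ² + (1-2τμ)ω² + τ²ω⁴)`, and if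
`2τμ ≤ 1` then this real part is bounded below by `-1/μ²`. -/
theorem vehicle_transfer_function_real_part
    (τ μ : ℝ) (hτ : 0 < τ) (hμ : 0 < μ) :
    (∀ ω : ℝ, ω ≠ 0 →
      ((1 : ℂ) / (τ * (I * ω) ^ 3 + (I * ω) ^ 2 + μ * (I * ω))).re =
        -1 / (μ ^ 2 + (1 - 2 * τ * μ) * ω ^ 2 + τ ^ 2 * ω ^ 4)) ∧
    (2 * τ * μ ≤ 1 → ∀ ω : ℝ, ω ≠ 0 →
      -1 / μ ^ 2 ≤
        ((1 : ℂ) / (τ * (I * ω) ^ 3 + (I * ω) ^ 2 + μ * (I * ω))).re) := by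
  refine ⟨fun ω hω => vehicle_aux τ μ ω hω, fun h2 ω hω => ?_⟩
  rw [vehicle_aux τ μ ω hω]
  have hμ2 : (0:ℝ) < μ ^ 2 := by positivity
  have hD : μ ^ 2 ≤ μ ^ 2 + (1 - 2 * τ * μ) * ω ^ 2 + τ ^ 2 * ω ^ 4 := by
    nlinarith [sq_nonneg ω, sq_nonneg (ω^2), sq_nonneg τ]
  have := one_div_le_one_div_of_le hμ2 hD
  rw [neg_div, neg_div]
  linarith
end
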